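/- Let (M, Y) be a rigid cotorsion pair on C. Suppose given short exact sequences 0 → Y₁ → B →(m) A → 0, 0 → Y₁ → M₁ →(n) Y → 0, 0 → B →(h) M₁ →(i) M → 0 and 0 → A →(f) Y →(g) M → 0 with Y₁, Y ∈ Y and M₁, M ∈ M, such that f ∘ m = n ∘ h, g ∘ n = i, and the two sequences with kernel Y₁ are compatible (the square with vertical maps h and f commutes over the identity of Y₁). Then for every object X and every morphism α : X → B such that m ∘ α factors through an object of Y, the morphism α itself factors through an object of Y. (That is, the image of m in the quotient C/Y is a monomorphism.) -/

import Mathlib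

open CategoryTheory CategoryTheory.Limits Opposite

attribute [local instance] CategoryTheory.Limits.HasFiniteBiproducts.of_hasFiniteProducts

noncomputable section

universe v u

variable {C : Type u} [Category.{v} C] [Abelian C]

/-- `f`, `g` form a short exact sequence `0 ⟶ X ⟶ Y ⟶ Z ⟶ 0`. -/
def IsSES {X Y Z : C} (f : X ⟶ Y) (g : Y ⟶ Z) : Prop :=
  ∃ w : f ≫ g = 0, (ShortComplex.mk f g w).ShortExact

/-- A morphism `f : P ⟶ A` is right minimal if every endomorphism `g` of `P`
with `f ∘ g = f` is an isomorphism. -/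
def RightMinimal {P A : C} (f : P ⟶ A) : Prop :=
  ∀ g : P ⟶ P, g ≫ f = f → IsIso g

/-- A morphism `f : A ⟶ I` is left minimal if every endomorphism `g` of `I`
with `g ∘ f = f` is an isomorphism. -/
def LeftMinimal {A I : C} (f : A ⟶ I) : Prop :=
  ∀ g : I ⟶ I, f ≫ g = f → IsIso g

/-- The category `C` is Krull–Schmidt: every nonzero object is a finite direct sum of
objects with local endomorphism rings. -/
def IsKrullSchmidt (C : Type u) [Category.{v} C] [Abelian C] : Prop :=
  ∀ A : C, ¬ IsZero A → ∃ (n : ℕ) (f : Fin n → C),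
    (∀ i, IsLocalRing (End (f i))) ∧ Nonempty (A ≅ ⨁ f)

/-- A subcategory (given by a predicate on objects, i.e. a full subcategory closed
under isomorphisms) which is closed under finite direct sums and direct summands. -/
structure IsAdditiveSubcat (S : C → Prop) : Prop where
  of_iso : ∀ {X Y : C}, (X ≅ Y) → S X → S Y
  sum_mem : ∀ {X Y : C}, S X → S Y → S (X ⊞ Y)
  summands_mem : ∀ {X Y : C}, S (X ⊞ Y) → S X ∧ S Y

section Ext

variable (k : Type*) [Field k] [Linear k C] [EnoughProjectives C]

/-- Vanishing of `Ext^n(A, B)`. -/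
def extVanishes (n : ℕ) (A B : C) : Prop :=
  IsZero (((_root_.Ext k C n).obj (op A)).obj B)

/-- `(M, Y)` is a cotorsion pair: `Ext¹(M, Y) = 0` and every object admits the two
approximation short exact sequences. -/
structure IsCotorsionPair (M Y : C → Prop) : Prop where
  subcatM : IsAdditiveSubcat M
  subcatY : IsAdditiveSubcat Y
  ext_vanishes : ∀ ⦃X Z : C⦄, M X → Y Z → extVanishes k 1 X Z
  exists_res : ∀ A : C, ∃ (Y₀ M₀ : C) (f : Y₀ ⟶ M₀) (g : M₀ ⟶ A),
      Y Y₀ ∧ M M₀ ∧ IsSES f g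
  exists_cores : ∀ A : C, ∃ (Y₀ M₀ : C) (f : A ⟶ Y₀) (g : Y₀ ⟶ M₀),
      Y Y₀ ∧ M M₀ ∧ IsSES f g

/-- A rigid cotorsion pair: moreover `Ext¹(M, M') = 0`. -/
def IsRigidCotorsionPair (M Y : C → Prop) : Prop :=
  IsCotorsionPair k M Y ∧ ∀ ⦃X Z : C⦄, M X → M Z → extVanishes k 1 X Z

/-- Membership in `CoCone(M, N)`: objects `A` admitting a short exact sequence
`0 ⟶ A ⟶ M₁ ⟶ N₂ ⟶ 0` with `M₁ ∈ M` and `N₂ ∈ N`. -/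
def MemCoCone (M N : C → Prop) (A : C) : Prop :=
  ∃ (B₁ B₂ : C) (f : A ⟶ B₁) (g : B₁ ⟶ B₂), M B₁ ∧ N B₂ ∧ IsSES f g

/-- Membership in `Cone(M, N)`: objects `A` admitting a short exact sequence
`0 ⟶ M₁ ⟶ N₂ ⟶ A ⟶ 0` with `M₁ ∈ M` and `N₂ ∈ N`. -/
def MemCone (M N : C → Prop) (A : C) : Prop :=
  ∃ (B₁ B₂ : C) (f : B₁ ⟶ B₂) (g : B₂ ⟶ A), M B₁ ∧ N B₂ ∧ IsSES f g

/-- A morphism factors through an object of the subcategory `S`. -/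
def FactorsThruSubcat (S : C → Prop) {X Z : C} (u : X ⟶ Z) : Prop :=
  ∃ (Y' : C) (w : X ⟶ Y') (v : Y' ⟶ Z), S Y' ∧ w ≫ v = u

/-- `A` has no nonzero direct summand belonging to `S`. -/
def NoNonzeroSummandIn (S : C → Prop) (A : C) : Prop :=
  ∀ (B B' : C), (A ≅ B ⊞ B') → S B → IsZero B

/-- `M` is fully rigid: it fits in a rigid cotorsion pair `(M, Y)` with `M` different
from the subcategory of projective objects, and every indecomposable object of `C`
belongs either to `Y` or to `H = CoCone(M, M)`. -/
def IsFullyRigid (M Y : C → Prop) : Prop :=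
  IsRigidCotorsionPair k M Y ∧ M ≠ (fun X : C => Projective X) ∧
    ∀ A : C, Indecomposable A → Y A ∨ MemCoCone M M A

/-- `M` is `n`-rigid: `Ext^i(M, M') = 0` for all `1 ≤ i ≤ n`. -/
def IsNRigid (n : ℕ) (M : C → Prop) : Prop :=
  ∀ i, 1 ≤ i → i ≤ n → ∀ ⦃X Z : C⦄, M X → M Z → extVanishes k i X Z

/-- `M` is `d`-cluster-tilting. -/
structure IsDClusterTilting (d : ℕ) (M : C → Prop) : Prop where
  subcatM : IsAdditiveSubcat M
  contravariantly_finite : ∀ A : C, ∃ (M₀ : C) (f : M₀ ⟶ A), M M₀ ∧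
      ∀ (M' : C) (g : M' ⟶ A), M M' → ∃ h : M' ⟶ M₀, h ≫ f = g
  covariantly_finite : ∀ A : C, ∃ (M₀ : C) (f : A ⟶ M₀), M M₀ ∧
      ∀ (M' : C) (g : A ⟶ M'), M M' → ∃ h : M₀ ⟶ M', f ≫ h = g
  mem_iff_ext_right : ∀ X : C, M X ↔
      ∀ i, 1 ≤ i → i ≤ d - 1 → ∀ ⦃M₀ : C⦄, M M₀ → extVanishes k i X M₀
  mem_iff_ext_left : ∀ X : C, M X ↔
      ∀ i, 1 ≤ i → i ≤ d - 1 → ∀ ⦃M₀ : C⦄, M M₀ → extVanishes k i M₀ X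

/-- The subcategories `M_l`: `M₀ = M` and `M_l = CoCone(M, M_{l-1})`. -/
def MSeq (M : C → Prop) : ℕ → C → Prop
  | 0 => M
  | l + 1 => MemCoCone M (MSeq M l)

end Ext

/-- `Ext¹(X, Z) = 0`, expressed by the splitting of all short exact sequences
`0 ⟶ Z ⟶ E ⟶ X ⟶ 0`. -/
def Ext1Vanishes (X Z : C) : Prop :=
  ∀ (E : C) (f : Z ⟶ E) (g : E ⟶ X), IsSES f g → ∃ s : X ⟶ E, s ≫ g = 𝟙 X

/-! The pullback of `0 → Y₁ → B → A → 0` along a map `Y' → A` with `Y' ∈ Y` is an extension of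
`Y'` by `Y₁` through which `α` factors, so it suffices that the right half of a cotorsion pair is
closed under extensions. For an extension `Q`, take `0 → Q → Y₀ → M₀ → 0` with `Y₀ ∈ Y`,
`M₀ ∈ M`: since `Ext¹(M₀, -)` vanishes on `Y₁` and `Y'`, it vanishes on `Q` (push out along
`Q → Y'`, split, pull back along the splitting), so the sequence splits and `Q` is a summand
of `Y₀`. -/

namespace IsSES

variable {X Y Z T : C} {f : X ⟶ Y} {g : Y ⟶ Z}

lemma w (hs : IsSES f g) : f ≫ g = 0 := hs.choose

lemma shortExact (hs : IsSES f g) : (ShortComplex.mk f g hs.w).ShortExact := hs.choose_spec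

lemma mono_f (hs : IsSES f g) : Mono f := hs.shortExact.mono_f

lemma epi_g (hs : IsSES f g) : Epi g := hs.shortExact.epi_g

lemma exists_lift (hs : IsSES f g) (t : T ⟶ Y) (ht : t ≫ g = 0) : ∃ z : T ⟶ X, z ≫ f = t :=
  have := hs.mono_f
  hs.shortExact.exact.lift' t ht

lemma exists_desc (hs : IsSES f g) (t : Y ⟶ T) (ht : f ≫ t = 0) : ∃ z : Z ⟶ T, g ≫ z = t :=
  have := hs.epi_g
  hs.shortExact.exact.desc' t ht

lemma of_exists_lift (w : f ≫ g = 0) [Mono f] [Epi g]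
    (hlift : ∀ (T : C) (t : T ⟶ Y), t ≫ g = 0 → ∃ z : T ⟶ X, z ≫ f = t) : IsSES f g := by
  choose z hz using hlift
  refine ⟨w, .mk' (ShortComplex.exact_of_f_is_kernel _ ?_) inferInstance inferInstance⟩
  exact KernelFork.IsLimit.ofι f w (fun t ht => z _ t ht) (fun t ht => hz _ t ht)
    (fun t ht u hu => by rw [← cancel_mono f, hu, hz])

lemma of_exists_desc (w : f ≫ g = 0) [Mono f] [Epi g]
    (hdesc : ∀ (T : C) (t : Y ⟶ T), f ≫ t = 0 → ∃ z : Z ⟶ T, g ≫ z = t) : IsSES f g := by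
  choose z hz using hdesc
  refine ⟨w, .mk' (ShortComplex.exact_of_g_is_cokernel _ ?_) inferInstance inferInstance⟩
  exact CokernelCofork.IsColimit.ofπ g w (fun t ht => z _ t ht) (fun t ht => hz _ t ht)
    (fun t ht u hu => by rw [← cancel_epi g, hu, hz])

end IsSES

section BaseChange

variable {X Y Z T : C} {f : X ⟶ Y} {g : Y ⟶ Z}

lemma isSES_pullback_snd (hs : IsSES f g) (v : T ⟶ Z) :
    IsSES (pullback.lift f 0 (by rw [hs.w, zero_comp]) : X ⟶ pullback g v)
      (pullback.snd g v) := by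
  have := hs.mono_f
  have := hs.epi_g
  have : Mono (pullback.lift f 0 (by rw [hs.w, zero_comp]) : X ⟶ pullback g v) :=
    mono_of_mono_fac (pullback.lift_fst _ _ _)
  refine .of_exists_lift (pullback.lift_snd _ _ _) fun T t ht => ?_
  obtain ⟨z, hz⟩ := hs.exists_lift (t ≫ pullback.fst g v) (by
    rw [Category.assoc, pullback.condition, reassoc_of% ht, zero_comp])
  exact ⟨z, pullback.hom_ext (by rw [Category.assoc, pullback.lift_fst, hz])
    (by rw [Category.assoc, pullback.lift_snd, comp_zero, ht])⟩

lemma isSES_pushout_inr (hs : IsSES f g) (u : X ⟶ T) :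
    IsSES (pushout.inr f u) (pushout.desc g 0 (by rw [hs.w, comp_zero])) := by
  have := hs.mono_f
  have := hs.epi_g
  have : Epi (pushout.desc g 0 (by rw [hs.w, comp_zero]) : pushout f u ⟶ Z) :=
    epi_of_epi_fac (pushout.inl_desc _ _ _)
  refine .of_exists_desc (pushout.inr_desc _ _ _) fun T t ht => ?_
  obtain ⟨z, hz⟩ := hs.exists_desc (pushout.inl f u ≫ t) (by
    rw [← Category.assoc, pushout.condition, Category.assoc, ht, comp_zero])
  exact ⟨z, pushout.hom_ext (by rw [← Category.assoc, pushout.inl_desc, hz])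
    (by rw [← Category.assoc, pushout.inr_desc, zero_comp, ht])⟩

lemma isSES_comp_pushout_inl {W : C} {j : W ⟶ X} {u : X ⟶ T} (hj : IsSES j u)
    (hs : IsSES f g) : IsSES (j ≫ f) (pushout.inl f u) := by
  have := hs.mono_f
  have := hj.mono_f
  have := hj.epi_g
  refine .of_exists_lift (by rw [Category.assoc, pushout.condition, reassoc_of% hj.w, zero_comp])
    fun S t ht => ?_
  obtain ⟨z, hz⟩ := hs.exists_lift t (by
    rw [← pushout.inl_desc (f := f) (g := u) g 0 (by rw [hs.w, comp_zero]), reassoc_of% ht,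
      zero_comp])
  obtain ⟨y, hy⟩ := hj.exists_lift z (by
    rw [← cancel_mono (pushout.inr f u), Category.assoc, ← pushout.condition, zero_comp,
      reassoc_of% hz, ht])
  exact ⟨y, by rw [reassoc_of% hy, hz]⟩

end BaseChange

lemma Ext1Vanishes.of_isSES {X W Q T : C} {j : W ⟶ Q} {p : Q ⟶ T} (hjp : IsSES j p)
    (hW : Ext1Vanishes X W) (hT : Ext1Vanishes X T) : Ext1Vanishes X Q := by
  intro E u g hs
  obtain ⟨s, hs'⟩ := hT _ _ _ (isSES_pushout_inr hs p)
  obtain ⟨t, ht⟩ := hW _ _ _ (isSES_pullback_snd (isSES_comp_pushout_inl hjp hs) s)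
  refine ⟨t ≫ pullback.fst _ _, ?_⟩
  calc (t ≫ pullback.fst (pushout.inl u p) s) ≫ g
      = t ≫ pullback.fst _ _ ≫ pushout.inl u p ≫ pushout.desc g 0 (by rw [hs.w, comp_zero]) := by
        rw [pushout.inl_desc, Category.assoc]
    _ = 𝟙 X := by rw [pullback.condition_assoc, hs', Category.comp_id, ht]

section Ext

variable (k : Type*) [Field k] [Linear k C] [EnoughProjectives C] {X Z : C}

lemma CategoryTheory.ProjectiveResolution.exists_d_comp_eq_of_extVanishes
    (hXZ : extVanishes k 1 X Z) (P : ProjectiveResolution X) (φ : P.complex.X 1 ⟶ Z) (hφ : P.complex.d 2 1 ≫ φ = 0) :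
    ∃ ψ : P.complex.X 0 ⟶ Z, P.complex.d 1 0 ≫ ψ = φ := by
  let K := P.complex.linearYonedaObj k Z
  have hK : K.ExactAt 1 :=
    (K.exactAt_iff_isZero_homology 1).2 (hXZ.of_iso (P.isoExt 1 Z).symm)
  have hex := (K.exactAt_iff' 0 1 2 (by simp) (by simp)).1 hK
  rw [ShortComplex.moduleCat_exact_iff] at hex
  exact hex φ hφ

lemma ext1Vanishes_of_extVanishes (hXZ : extVanishes k 1 X Z) : Ext1Vanishes X Z := by
  intro E f g hs
  have := hs.mono_f
  have := hs.epi_g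
  let P := ProjectiveResolution.of X
  let π₀ : P.complex.X 0 ⟶ X := P.π.f 0
  have : Epi π₀ := inferInstanceAs (Epi (P.π.f 0))
  obtain ⟨l, hl⟩ : ∃ l : P.complex.X 0 ⟶ E, l ≫ g = π₀ :=
    ⟨Projective.factorThru π₀ g, Projective.factorThru_comp _ _⟩
  obtain ⟨φ, hφ⟩ := hs.exists_lift (P.complex.d 1 0 ≫ l) (by
    rw [Category.assoc, hl]; exact P.complex_d_comp_π_f_zero)
  -- `φ` is a 1-cocycle; correcting `l` by a cochain `ψ` with `dψ = φ` makes it descend to `X`.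
  obtain ⟨ψ, hψ⟩ := P.exists_d_comp_eq_of_extVanishes k hXZ φ (by
    rw [← cancel_mono f, Category.assoc, hφ, zero_comp, P.complex.d_comp_d_assoc, zero_comp])
  have hπ₀ : (ShortComplex.mk _ π₀ P.complex_d_comp_π_f_zero).Exact := P.exact₀
  obtain ⟨σ, hσ⟩ := hπ₀.desc' (l - ψ ≫ f) (by
    rw [Preadditive.comp_sub, reassoc_of% hψ, hφ, sub_self])
  refine ⟨σ, ?_⟩
  rw [← cancel_epi π₀, reassoc_of% hσ, Preadditive.sub_comp, hl, Category.assoc, hs.w,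
    comp_zero, sub_zero, Category.comp_id]

end Ext

lemma IsCotorsionPair.right_mem_of_isSES {k : Type*} [Field k] [Linear k C] [EnoughProjectives C]
    {M Y : C → Prop} (hMY : IsCotorsionPair k M Y) {Y₁ Q Y₂ : C} {j : Y₁ ⟶ Q} {p : Q ⟶ Y₂}
    (hjp : IsSES j p) (hY₁ : Y Y₁) (hY₂ : Y Y₂) : Y Q := by
  obtain ⟨Y₀, M₀, q, r, hY₀, hM₀, hqr⟩ := hMY.exists_cores Q
  have hM₀Q : Ext1Vanishes M₀ Q := Ext1Vanishes.of_isSES hjp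
    (ext1Vanishes_of_extVanishes k (hMY.ext_vanishes hM₀ hY₁))
    (ext1Vanishes_of_extVanishes k (hMY.ext_vanishes hM₀ hY₂))
  obtain ⟨s, hs⟩ := hM₀Q _ _ _ hqr
  have := hqr.mono_f
  let splitting := ShortComplex.Splitting.ofExactOfSection _ hqr.shortExact.exact s hs this
  exact (hMY.subcatY.summands_mem (hMY.subcatY.of_iso splitting.isoBinaryBiproduct hY₀)).1

theorem stmt4_general (k : Type*) [Field k] [Linear k C]
    [EnoughProjectives C]
    (M Y : C → Prop) (hpair : IsRigidCotorsionPair k M Y)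
    {Y₁ B A : C}
    (i₁ : Y₁ ⟶ B) (m : B ⟶ A)
    (hY₁ : Y Y₁)
    (s₁ : IsSES i₁ m)
    (X : C) (α : X ⟶ B) (hα : FactorsThruSubcat Y (α ≫ m)) :
    FactorsThruSubcat Y α := by
  obtain ⟨Y', w, v, hY', hw⟩ := hα
  exact ⟨pullback m v, pullback.lift α w hw.symm, pullback.fst m v,
    hpair.1.right_mem_of_isSES (isSES_pullback_snd s₁ v) hY₁ hY', pullback.lift_fst _ _ _⟩

theorem stmt4 (k : Type*) [Field k] [Linear k C]
    [EnoughProjectives C] [EnoughInjectives C]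
    (hKS : IsKrullSchmidt C) (hfin : ∀ X Y : C, Module.Finite k (X ⟶ Y))
    (M Y : C → Prop) (hpair : IsRigidCotorsionPair k M Y)
    {Y₁ B A M₁ Y₀ M₀ : C}
    (i₁ : Y₁ ⟶ B) (m : B ⟶ A) (i₂ : Y₁ ⟶ M₁) (n : M₁ ⟶ Y₀)
    (h : B ⟶ M₁) (i : M₁ ⟶ M₀) (f : A ⟶ Y₀) (g : Y₀ ⟶ M₀)
    (hY₁ : Y Y₁) (hY₀ : Y Y₀) (hM₁ : M M₁) (hM₀ : M M₀)
    (s₁ : IsSES i₁ m) (s₂ : IsSES i₂ n) (s₃ : IsSES h i) (s₄ : IsSES f g)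
    (c₁ : m ≫ f = h ≫ n) (c₂ : n ≫ g = i) (c₃ : i₁ ≫ h = i₂)
    (X : C) (α : X ⟶ B) (hα : FactorsThruSubcat Y (α ≫ m)) :
    FactorsThruSubcat Y α :=
  stmt4_general k M Y hpair i₁ m hY₁ s₁ X α hα
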